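/- arXiv:cs/0203022 — 2 statements merged into one kernel-verified Lean document; each statement's English description precedes it below -/
import Mathlib

section
/- For every Pos abstraction f over X and every sharing abstraction S over X: γ_Pos(f) ∩ γ_Sh(S) = γ_Pos(f) ∩ γ_Sh(trim(f, S)). -/
/-!
Two idempotent mgus `θ₁, θ₂` of `E` are instances of each other, so `θ₂ ∘ θ₁ = θ₂`; this makes
every model of `θ₂` a model of `θ₁`, hence `θ₂` satisfies `f` as soon as `θ₁` does. For an
idempotent `θ₂` the complement of `occ(θ₂, y)` is a model, so the complement in `X` of each
sharing group `occ(θ₂, y) ∩ X` lies in `f`: every group of `α_Sh(θ₂)` survives `trim`.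
-/

open scoped Classical

namespace SharingPaper

/-- Finite first-order terms over an arity-indexed alphabet `F`, with
variables drawn from the countably infinite set `ℕ` (playing the role of `U`). -/
inductive Term (F : ℕ → Type) : Type
  | var : ℕ → Term F
  | app : (n : ℕ) → F n → (Fin n → Term F) → Term F

namespace Term

variable {F : ℕ → Type}

/-- The set `var(t)` of variables occurring in a term. -/
def vars : Term F → Set ℕ
  | var x => {x}
  | app n _ ts => ⋃ i : Fin n, vars (ts i)

/-- Number of occurrences of the variable `x` in a term. -/
def count (x : ℕ) : Term F → ℕ
  | var y => if y = x then 1 else 0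
  | app n _ ts => ∑ i : Fin n, count x (ts i)

/-- `χ(x, t) = min(2, number of occurrences of x in t)`. -/
def chiVar (x : ℕ) (t : Term F) : ℕ := min 2 (t.count x)

/-- `χ(t) = max {χ(x, t) | x ∈ U}`. -/
noncomputable def mult (t : Term F) : ℕ := sSup (Set.range fun x => chiVar x t)

end Term

variable {F : ℕ → Type}

/-- Substitutions, represented as maps from variables to terms. -/
abbrev Subst (F : ℕ → Type) := ℕ → Term F

namespace Subst

/-- Homomorphic extension of a substitution to terms. -/
def apply (θ : Subst F) : Term F → Term F
  | .var x => θ x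
  | .app n f ts => .app n f fun i => apply θ (ts i)

/-- `dom(θ) = {u | θ(u) ≠ u}`. -/
def dom (θ : Subst F) : Set ℕ := {x | θ x ≠ .var x}

/-- `rng(θ) = ∪ {var(θ(u)) | u ∈ dom(θ)}`. -/
def rng (θ : Subst F) : Set ℕ := ⋃ x ∈ dom θ, (θ x).vars

/-- A genuine substitution has a finite domain. -/
def IsSubst (θ : Subst F) : Prop := (dom θ).Finite

/-- Composition: `(θ ∘ ψ)(u) = θ(ψ(u))`. -/
def comp (θ ψ : Subst F) : Subst F := fun x => θ.apply (ψ x)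

/-- `θ` is idempotent iff `dom(θ) ∩ rng(θ) = ∅`. -/
def Idempotent (θ : Subst F) : Prop := dom θ ∩ rng θ = ∅

/-- `θ ≤ ψ` iff `ψ = δ ∘ θ` for some substitution `δ`. -/
def Le (θ ψ : Subst F) : Prop := ∃ δ : Subst F, IsSubst δ ∧ ψ = comp δ θ

/-- `occ(θ, y) = {u ∈ U | y ∈ var(θ(u))}`. -/
def occ (θ : Subst F) (y : ℕ) : Set ℕ := {u | y ∈ (θ u).vars}

/-- `α_Sh(θ) = {occ(θ, u) ∩ X | u ∈ U}`. -/
def alphaSh (X : Set ℕ) (θ : Subst F) : Set (Set ℕ) :=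
  Set.range fun u => occ θ u ∩ X

/-- An assignment `M ⊆ U` models `θ` iff for every `x ↦ t ∈ θ`, `x ∈ M ↔ var(t) ⊆ M`. -/
def Models (M : Set ℕ) (θ : Subst F) : Prop :=
  ∀ x ∈ dom θ, (x ∈ M ↔ (θ x).vars ⊆ M)

/-- `θ` satisfies a Pos abstraction `f` over `X` iff `M ∩ X ∈ f` for every
assignment `M` that models `θ`. -/
def Satisfies (X : Set ℕ) (θ : Subst F) (f : Set (Set ℕ)) : Prop :=
  ∀ M : Set ℕ, Models M θ → M ∩ X ∈ f

end Subst

/-- The set of unifiers of a set of equations. -/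
def unif (E : Set (Term F × Term F)) : Set (Subst F) :=
  {θ | Subst.IsSubst θ ∧ ∀ p ∈ E, θ.apply p.1 = θ.apply p.2}

/-- Most general unifiers. -/
def mgu (E : Set (Term F × Term F)) : Set (Subst F) :=
  {θ ∈ unif E | ∀ ψ ∈ unif E, Subst.Le θ ψ}

/-- Idempotent most general unifiers. -/
def imgu (E : Set (Term F × Term F)) : Set (Subst F) :=
  {θ ∈ mgu E | Subst.Idempotent θ}

/-- `γ_Sh(S)`. -/
def gammaSh (X : Set ℕ) (S : Set (Set ℕ)) : Set (Set (Term F × Term F)) :=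
  {E | E.Finite ∧ ∃ θ ∈ imgu E, Subst.alphaSh X θ ⊆ S}

/-- `γ_Fr(F)`. -/
def gammaFr (Fv : Set ℕ) : Set (Set (Term F × Term F)) :=
  {E | E.Finite ∧ ∃ θ ∈ imgu E, ∀ x ∈ Fv, ∃ y, θ x = Term.var y}

/-- `γ_Lin(L)`. -/
def gammaLin (L : Set ℕ) : Set (Set (Term F × Term F)) :=
  {E | E.Finite ∧ ∃ θ ∈ imgu E, ∀ x ∈ L, (θ x).mult ≤ 1}

/-- `γ_Pos(f)`. -/
def gammaPos (X : Set ℕ) (f : Set (Set ℕ)) : Set (Set (Term F × Term F)) :=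
  {E | E.Finite ∧ ∃ θ ∈ imgu E, Subst.Satisfies X θ f}

/-- `γ_SFL(S, F, L)`. -/
def gammaSFL (X : Set ℕ) (S : Set (Set ℕ)) (Fv L : Set ℕ) :
    Set (Set (Term F × Term F)) :=
  gammaSh X S ∩ gammaFr Fv ∩ gammaLin L

/-- `var(S) = ∪ {G | G ∈ S}`. -/
def varS {α : Type*} (S : Set (Set α)) : Set α := ⋃ G ∈ S, G

/-- `rel(t, S) = {G ∈ S | var(t) ∩ G ≠ ∅}`. -/
def rel (t : Term F) (S : Set (Set ℕ)) : Set (Set ℕ) :=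
  {G ∈ S | t.vars ∩ G ≠ ∅}

/-- Closure `S*`: the least superset of `S` closed under binary unions. -/
def closure {α : Type*} (S : Set (Set α)) : Set (Set α) :=
  ⋂₀ {S' | S ⊆ S' ∧ ∀ G1 ∈ S', ∀ G2 ∈ S', G1 ∪ G2 ∈ S'}

/-- Pairwise union `S1 ⊎ S2`. -/
def pairUnion {α : Type*} (S1 S2 : Set (Set α)) : Set (Set α) :=
  {G | ∃ G1 ∈ S1, ∃ G2 ∈ S2, G = G1 ∪ G2}

/-- `S^{*F}`: the least superset `S'` of `S` such that `G1 ∪ G2 ∈ S'` whenever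
`G1, G2 ∈ S'` and `G1 ∩ G2 ∩ F = ∅`. -/
def closureF {α : Type*} (Fv : Set α) (S : Set (Set α)) : Set (Set α) :=
  ⋂₀ {S' | S ⊆ S' ∧ ∀ G1 ∈ S', ∀ G2 ∈ S', G1 ∩ G2 ∩ Fv = ∅ → G1 ∪ G2 ∈ S'}

/-- `S1 ⊎_F S2`. -/
def pairUnionF {α : Type*} (Fv : Set α) (S1 S2 : Set (Set α)) : Set (Set α) :=
  {G | ∃ G1 ∈ S1, ∃ G2 ∈ S2, (G1 ≠ G2 → G1 ∩ G2 ∩ Fv = ∅) ∧ G = G1 ∪ G2}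

/-- The Filé decomposition `K_F(S)`. -/
def KF {α : Type*} (Fv : Set α) (S : Set (Set α)) : Set (Set (Set α)) :=
  {B | B ⊆ S ∧ Fv ⊆ varS B ∧
    ∀ G1 ∈ B, ∀ G2 ∈ B, G1 ≠ G2 → G1 ∩ G2 ∩ Fv = ∅}

/-- Abstract multiplicity `χ(t, S, L)`. -/
noncomputable def chiA (t : Term F) (S : Set (Set ℕ)) (L : Set ℕ) : ℕ :=
  if (∃ x ∈ varS S, Term.chiVar x t = 2) ∨
     (∃ x ∈ varS S, x ∈ t.vars \ L) ∨
     (∃ G ∈ S, ∃ x ∈ t.vars, ∃ y ∈ t.vars, x ≠ y ∧ x ∈ G ∧ y ∈ G)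
  then 2 else 1

/-- The term `t` is a variable belonging to the freeness set `Fv` ("t ∈ F"). -/
def IsFreeTerm (t : Term F) (Fv : Set ℕ) : Prop := ∃ x ∈ Fv, t = Term.var x

/-- The term `t` is a variable ("t ∈ U"). -/
def IsVarTerm (t : Term F) : Prop := ∃ x, t = Term.var x


/-- `trim(f, S) = {G ∈ S | X \ G ∈ f}`. -/
def trim (X : Set ℕ) (f S : Set (Set ℕ)) : Set (Set ℕ) := {G ∈ S | X \ G ∈ f}

namespace Subst

theorem vars_apply (δ : Subst F) (t : Term F) :
    (δ.apply t).vars = ⋃ z ∈ t.vars, (δ z).vars := by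
  induction t with
  | var x => simp [apply, Term.vars]
  | app n f ts ih =>
    simp only [apply, Term.vars, ih]
    ext y
    simp only [Set.mem_iUnion]
    exact ⟨fun ⟨i, z, hz, hy⟩ => ⟨z, ⟨i, hz⟩, hy⟩, fun ⟨z, ⟨i, hz⟩, hy⟩ => ⟨i, z, hz, hy⟩⟩

theorem apply_comp (δ θ : Subst F) (t : Term F) :
    (comp δ θ).apply t = δ.apply (θ.apply t) := by
  induction t with
  | var x => rfl
  | app n f ts ih => simp only [apply, ih]

theorem apply_eq_self {θ : Subst F} {t : Term F} (h : ∀ z ∈ t.vars, θ z = .var z) :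
    θ.apply t = t := by
  induction t with
  | var x => exact h x rfl
  | app n f ts ih =>
    simp only [apply]
    congr 1
    funext i
    exact ih i fun z hz => h z (Set.mem_iUnion_of_mem i hz)

theorem Idempotent.eq_var_of_mem_vars {θ : Subst F} (hθ : θ.Idempotent) {x z : ℕ}
    (hz : z ∈ (θ x).vars) : θ z = .var z := by
  by_cases hx : x ∈ θ.dom
  · by_contra hzd
    have : z ∈ θ.dom ∩ θ.rng := ⟨hzd, Set.mem_biUnion hx hz⟩
    rwa [hθ] at this
  · rw [not_not.mp hx] at hz
    rw [show z = x from hz]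
    exact not_not.mp hx

theorem Idempotent.apply_self {θ : Subst F} (hθ : θ.Idempotent) (x : ℕ) :
    θ.apply (θ x) = θ x :=
  apply_eq_self fun _ hz => hθ.eq_var_of_mem_vars hz

theorem Le.apply_eq {θ ψ : Subst F} (hθ : θ.Idempotent) (h : Le θ ψ) (x : ℕ) :
    ψ.apply (θ x) = ψ x := by
  obtain ⟨δ, -, rfl⟩ := h
  show (comp δ θ).apply (θ x) = δ.apply (θ x)
  rw [apply_comp, hθ.apply_self]

theorem models_iff {M : Set ℕ} {θ : Subst F} :
    Models M θ ↔ ∀ x, (x ∈ M ↔ (θ x).vars ⊆ M) := by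
  refine ⟨fun h x => ?_, fun h x _ => h x⟩
  by_cases hx : x ∈ θ.dom
  · exact h x hx
  · simp [not_not.mp hx, Term.vars]

/-- Since `var(θ₂ x) = ⋃ {var(θ₂ z) | z ∈ var(θ₁ x)}`, the model condition of `θ₂` at `x`
rewrites, through the one at each such `z`, into that of `θ₁` at `x`. -/
theorem Models.of_apply_eq {M : Set ℕ} {θ₁ θ₂ : Subst F}
    (h : ∀ x, θ₂.apply (θ₁ x) = θ₂ x) (hM : Models M θ₂) : Models M θ₁ := by
  rw [models_iff] at hM ⊢
  intro x
  rw [hM x, ← h x, vars_apply, Set.iUnion₂_subset_iff]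
  exact forall₂_congr fun z _ => (hM z).symm

theorem Idempotent.models_compl_occ {θ : Subst F} (hθ : θ.Idempotent) (y : ℕ) :
    Models (occ θ y)ᶜ θ := by
  refine models_iff.mpr fun x => ?_
  have hvars : ∀ z ∈ (θ x).vars, (θ z).vars = {z} := fun z hz => by
    rw [hθ.eq_var_of_mem_vars hz]; rfl
  constructor
  · intro hy z hz hyz
    have hyz : y ∈ (θ z).vars := hyz
    rw [hvars z hz, Set.mem_singleton_iff] at hyz
    subst hyz
    exact hy hz
  · intro hsub hy
    exact hsub hy (show y ∈ (θ y).vars by rw [hvars y hy]; rfl)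

theorem Satisfies.of_imgu {X : Set ℕ} {f : Set (Set ℕ)} {E : Set (Term F × Term F)}
    {θ₁ θ₂ : Subst F} (hθ₁ : θ₁ ∈ imgu E) (hθ₂ : θ₂ ∈ imgu E) (h : Satisfies X θ₁ f) :
    Satisfies X θ₂ f := fun _ hM =>
  h _ (hM.of_apply_eq ((hθ₁.1.2 θ₂ hθ₂.1.1).apply_eq hθ₁.2))

theorem Satisfies.diff_mem_of_mem_alphaSh {X : Set ℕ} {f : Set (Set ℕ)} {θ : Subst F}
    {G : Set ℕ} (hθ : θ.Idempotent) (h : Satisfies X θ f) (hG : G ∈ alphaSh X θ) :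
    X \ G ∈ f := by
  obtain ⟨y, rfl⟩ := hG
  rw [Set.sdiff_inter_self_eq_sdiff, Set.sdiff_eq_compl_inter]
  exact h _ (hθ.models_compl_occ y)

end Subst

theorem gammaSh_mono {X : Set ℕ} {S T : Set (Set ℕ)} (h : S ⊆ T) :
    (gammaSh X S : Set (Set (Term F × Term F))) ⊆ gammaSh X T :=
  fun _ ⟨hfin, θ, hθ, hsub⟩ => ⟨hfin, θ, hθ, hsub.trans h⟩

theorem stmt3_general {F : ℕ → Type} (X : Set ℕ) (f : Set (Set ℕ)) (S : Set (Set ℕ)) :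
    (gammaPos X f ∩ gammaSh X S : Set (Set (Term F × Term F))) =
      gammaPos X f ∩ gammaSh X (trim X f S) := by
  refine subset_antisymm ?_ (Set.inter_subset_inter_right _ (gammaSh_mono fun _ hG => hG.1))
  rintro E ⟨hPos, hfin, θ, hθ, hsub⟩
  obtain ⟨θ', hθ', hsat⟩ := hPos.2
  exact ⟨hPos, hfin, θ, hθ, fun G hG =>
    ⟨hsub hG, (hsat.of_imgu hθ' hθ).diff_mem_of_mem_alphaSh hθ.2 hG⟩⟩

/-- `γ_Pos(f) ∩ γ_Sh(S) = γ_Pos(f) ∩ γ_Sh(trim(f, S))`. -/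
theorem stmt3 {F : ℕ → Type} (X : Set ℕ) (hX : X.Finite)
    (f : Set (Set ℕ)) (hfX : X ∈ f) (hf : ∀ m ∈ f, m ⊆ X)
    (S : Set (Set ℕ)) (hS : ∅ ∈ S) (hSX : ∀ G ∈ S, G ⊆ X) :
    (gammaPos X f ∩ gammaSh X S : Set (Set (Term F × Term F))) =
      gammaPos X f ∩ gammaSh X (trim X f S) :=
  stmt3_general X f S

end SharingPaper
end

section
/- Let X be a set, F ⊆ X, S a set of subsets of X, B ∈ K_F(S), and R ⊆ B. Then R* = R^{*F}. -/
namespace SharingPaper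

/-!
Every element of `R*` is the union of finitely many members of `R`. When the members of `R`
pairwise do not meet inside `F`, such a union can be built one member at a time, each new
member meeting the union built so far outside `F` only; so it already lies in `R^{*F}`.
The reverse inclusion `R^{*F} ⊆ R*` holds for every `R`.
-/

section

variable {α : Type*}

theorem closure_subset {S S' : Set (Set α)} (hS : S ⊆ S')
    (hS' : ∀ G1 ∈ S', ∀ G2 ∈ S', G1 ∪ G2 ∈ S') : closure S ⊆ S' :=
  Set.sInter_subset_of_mem ⟨hS, hS'⟩

theorem subset_closure (S : Set (Set α)) : S ⊆ closure S :=
  Set.subset_sInter fun _ h => h.1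

theorem union_mem_closure {S : Set (Set α)} {G1 G2 : Set α} (h1 : G1 ∈ closure S)
    (h2 : G2 ∈ closure S) : G1 ∪ G2 ∈ closure S :=
  fun _ hS' => hS'.2 _ (h1 _ hS') _ (h2 _ hS')

theorem closureF_subset {Fv : Set α} {S S' : Set (Set α)} (hS : S ⊆ S')
    (hS' : ∀ G1 ∈ S', ∀ G2 ∈ S', G1 ∩ G2 ∩ Fv = ∅ → G1 ∪ G2 ∈ S') : closureF Fv S ⊆ S' :=
  Set.sInter_subset_of_mem ⟨hS, hS'⟩

theorem subset_closureF (Fv : Set α) (S : Set (Set α)) : S ⊆ closureF Fv S :=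
  Set.subset_sInter fun _ h => h.1

theorem union_mem_closureF {Fv : Set α} {S : Set (Set α)} {G1 G2 : Set α}
    (h1 : G1 ∈ closureF Fv S) (h2 : G2 ∈ closureF Fv S) (h : G1 ∩ G2 ∩ Fv = ∅) :
    G1 ∪ G2 ∈ closureF Fv S :=
  fun _ hS' => hS'.2 _ (h1 _ hS') _ (h2 _ hS') h

theorem closureF_subset_closure (Fv : Set α) (S : Set (Set α)) : closureF Fv S ⊆ closure S :=
  closureF_subset (subset_closure S) fun _ h1 _ h2 _ => union_mem_closure h1 h2

theorem closure_subset_finite_sUnions (S : Set (Set α)) :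
    closure S ⊆ {G | ∃ T : Finset (Set α), T.Nonempty ∧ ↑T ⊆ S ∧ G = ⋃₀ ↑T} := by
  refine closure_subset (fun G hG => ⟨{G}, Finset.singleton_nonempty G, by simpa using hG, by simp⟩) ?_
  rintro _ ⟨T1, hT1, hT1S, rfl⟩ _ ⟨T2, -, hT2S, rfl⟩
  refine ⟨T1 ∪ T2, hT1.mono Finset.subset_union_left, ?_, by simp [Set.sUnion_union]⟩
  rw [Finset.coe_union]
  exact Set.union_subset hT1S hT2S

theorem inter_sUnion_inter_eq_empty {Fv G : Set α} {T : Set (Set α)}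
    (h : ∀ t ∈ T, G ∩ t ∩ Fv = ∅) : G ∩ ⋃₀ T ∩ Fv = ∅ := by
  refine Set.eq_empty_of_forall_notMem ?_
  rintro x ⟨⟨hxG, t, ht, hxt⟩, hxF⟩
  exact (h t ht).subset ⟨⟨hxG, hxt⟩, hxF⟩

theorem sUnion_mem_closureF {Fv : Set α} {R : Set (Set α)}
    (hR : R.Pairwise fun G1 G2 => G1 ∩ G2 ∩ Fv = ∅) {T : Finset (Set α)} (hT : T.Nonempty)
    (hTR : ↑T ⊆ R) : ⋃₀ ↑T ∈ closureF Fv R := by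
  induction hT using Finset.Nonempty.cons_induction with
  | singleton G =>
    simpa using subset_closureF Fv R (hTR (by simp))
  | cons G T hGT _ ih =>
    rw [Finset.coe_cons, Set.insert_subset_iff] at hTR
    have hdisj : G ∩ ⋃₀ ↑T ∩ Fv = ∅ := inter_sUnion_inter_eq_empty fun t ht =>
      hR hTR.1 (hTR.2 ht) fun hGt => hGT (hGt ▸ ht)
    rw [Finset.coe_cons, Set.sUnion_insert]
    exact union_mem_closureF (subset_closureF Fv R hTR.1) (ih hTR.2) hdisj

theorem closure_eq_closureF_of_pairwise {Fv : Set α} {R : Set (Set α)}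
    (hR : R.Pairwise fun G1 G2 => G1 ∩ G2 ∩ Fv = ∅) : closure R = closureF Fv R := by
  refine subset_antisymm (fun G hG => ?_) (closureF_subset_closure Fv R)
  obtain ⟨T, hT, hTR, rfl⟩ := closure_subset_finite_sUnions R hG
  exact sUnion_mem_closureF hR hT hTR

end

/-- if `B ∈ K_F(S)` and `R ⊆ B` then `R* = R^{*F}`. -/
theorem stmt10 {α : Type*} (Fv : Set α) (S : Set (Set α))
    (B : Set (Set α)) (hB : B ∈ KF Fv S) (R : Set (Set α)) (hR : R ⊆ B) :
    closure R = closureF Fv R :=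
  closure_eq_closureF_of_pairwise (Set.Pairwise.mono hR hB.2.2)

end SharingPaper
end
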